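/- arXiv:2205.05004 — 2 statements merged into one kernel-verified Lean document; each statement's English description precedes it below -/
import Mathlib

section
/- Let H be an Ising Hamiltonian on n spins and G^SK its SK graph with total weight W = Σ_{1≤i<j≤n+1} w(i,j). Then min_{x ∈ {−1,+1}^n} H(x) = min_{y ∈ {−1,+1}^{n+1}} H^SK(y) = 2·MC(G^SK) − W, where MC(G^SK) is the minimum cut value of G^SK. -/
open Finset

/-- The Ising Hamiltonian on `n` spins (0-indexed: spins `0,…,n-1`):
`H(x) = −Σ_i h_i x_i − Σ_{i<j} J_{ij} x_i x_j`. -/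
noncomputable def isingH (n : ℕ) (h : ℕ → ℝ) (J : ℕ → ℕ → ℝ) (x : ℕ → ℝ) : ℝ :=
  -(∑ i ∈ range n, h i * x i) -
    ∑ i ∈ range n, ∑ j ∈ range n, if i < j then J i j * x i * x j else 0

/-- Weights of the SK graph on nodes `0,…,n` (node `n` is the extra node capturing the
external fields): `w(i,j) = J_{ij}` for `i < j < n`, `w(i,n) = h_i` for `i < n`,
extended symmetrically, with zero diagonal. -/
noncomputable def skWeight (n : ℕ) (h : ℕ → ℝ) (J : ℕ → ℕ → ℝ) (i j : ℕ) : ℝ :=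
  if i < j then (if j = n then h i else J i j)
  else if j < i then (if i = n then h j else J j i)
  else 0

/-- The SK Hamiltonian `H^SK(y) = −Σ_{i<j} w(i,j) y_i y_j` on the `n+1` nodes. -/
noncomputable def skH (n : ℕ) (h : ℕ → ℝ) (J : ℕ → ℕ → ℝ) (y : ℕ → ℝ) : ℝ :=
  -∑ i ∈ range (n + 1), ∑ j ∈ range (n + 1),
      if i < j then skWeight n h J i j * y i * y j else 0

/-- Total weight `W = Σ_{i<j} w(i,j)` of the SK graph. -/
noncomputable def skTotalWeight (n : ℕ) (h : ℕ → ℝ) (J : ℕ → ℕ → ℝ) : ℝ :=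
  ∑ i ∈ range (n + 1), ∑ j ∈ range (n + 1), if i < j then skWeight n h J i j else 0

/-- Cut capacity `c(S) = Σ_{u ∈ S, v ∈ V \ S} w(u,v)` on the SK graph, for `S ⊆ {0,…,n}`. -/
noncomputable def skCut (n : ℕ) (h : ℕ → ℝ) (J : ℕ → ℕ → ℝ) (S : Finset ℕ) : ℝ :=
  ∑ u ∈ S, ∑ v ∈ range (n + 1) \ S, skWeight n h J u v

/-- Minimum cut value of the SK graph (cuts range over all subsets, including `∅`). -/
noncomputable def skMC (n : ℕ) (h : ℕ → ℝ) (J : ℕ → ℕ → ℝ) : ℝ :=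
  sInf (skCut n h J '' {S : Finset ℕ | S ⊆ range (n + 1)})

/-!
Fixing the spin of the extra node `n` to `+1` turns `H^SK` into `H` (set `x_i = y_i y_n`), and
`H^SK` is invariant under flipping all spins, so both minima agree. For a spin configuration `y`
with `S = {i | y_i = 1}`, the product `y_i y_j` is `-1` exactly on the edges crossing the cut, so
`H^SK(y) = -(W - 2 c(S)) = 2 c(S) - W`; minimising over `S` gives `2 MC - W`.
-/

section DoubleSum

variable {ι M : Type*}

theorem sum_sum_eq_two_nsmul_sum_sum_lt [LinearOrder ι] [AddCommMonoid M] (s : Finset ι)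
    (g : ι → ι → M) (hsymm : ∀ i j, g i j = g j i) (hdiag : ∀ i, g i i = 0) :
    ∑ i ∈ s, ∑ j ∈ s, g i j = 2 • ∑ i ∈ s, ∑ j ∈ s, if i < j then g i j else 0 := by
  have hsplit : ∀ i j, (if i < j then g i j else 0) + (if j < i then g j i else 0) = g i j := by
    intro i j
    rcases lt_trichotomy i j with hij | rfl | hij
    · simp [hij, hij.not_gt]
    · simp [hdiag]
    · simp [hij, hij.not_gt, hsymm i j]
  conv_lhs => enter [2, i, 2, j]; rw [← hsplit i j]
  rw [two_nsmul, sum_congr rfl fun i _ => sum_add_distrib, sum_add_distrib,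
    sum_comm (f := fun i j => if j < i then g j i else 0)]

theorem sum_sum_eq_blocks [DecidableEq ι] [AddCommMonoid M] {s S : Finset ι} (hS : S ⊆ s)
    (f : ι → ι → M) :
    ∑ i ∈ s, ∑ j ∈ s, f i j =
      ∑ i ∈ S, ∑ j ∈ S, f i j + ∑ i ∈ S, ∑ j ∈ s \ S, f i j +
        ∑ i ∈ s \ S, ∑ j ∈ S, f i j + ∑ i ∈ s \ S, ∑ j ∈ s \ S, f i j := by
  have hsplit (g : ι → M) : ∑ j ∈ s, g j = ∑ j ∈ S, g j + ∑ j ∈ s \ S, g j := by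
    rw [add_comm, sum_sdiff hS]
  simp only [hsplit, sum_add_distrib]
  abel

theorem sum_sum_mul_sign_eq [DecidableEq ι] {R : Type*} [CommRing R] {s S : Finset ι}
    (hS : S ⊆ s) (w : ι → ι → R) (hsymm : ∀ i j, w i j = w j i) (y : ι → R)
    (hyS : ∀ i ∈ S, y i = 1) (hyT : ∀ i ∈ s \ S, y i = -1) :
    ∑ i ∈ s, ∑ j ∈ s, w i j * y i * y j =
      ∑ i ∈ s, ∑ j ∈ s, w i j - 4 * ∑ i ∈ S, ∑ j ∈ s \ S, w i j := by
  have hswap : ∑ i ∈ s \ S, ∑ j ∈ S, w i j = ∑ i ∈ S, ∑ j ∈ s \ S, w i j := by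
    rw [sum_comm]; simp only [hsymm]
  have hSS : ∑ i ∈ S, ∑ j ∈ S, w i j * y i * y j = ∑ i ∈ S, ∑ j ∈ S, w i j :=
    sum_congr rfl fun i hi => sum_congr rfl fun j hj => by simp [hyS i hi, hyS j hj]
  have hST : ∑ i ∈ S, ∑ j ∈ s \ S, w i j * y i * y j = -∑ i ∈ S, ∑ j ∈ s \ S, w i j := by
    simp only [← sum_neg_distrib]
    exact sum_congr rfl fun i hi => sum_congr rfl fun j hj => by simp [hyS i hi, hyT j hj]
  have hTS : ∑ i ∈ s \ S, ∑ j ∈ S, w i j * y i * y j = -∑ i ∈ s \ S, ∑ j ∈ S, w i j := by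
    simp only [← sum_neg_distrib]
    exact sum_congr rfl fun i hi => sum_congr rfl fun j hj => by simp [hyT i hi, hyS j hj]
  have hTT : ∑ i ∈ s \ S, ∑ j ∈ s \ S, w i j * y i * y j = ∑ i ∈ s \ S, ∑ j ∈ s \ S, w i j :=
    sum_congr rfl fun i hi => sum_congr rfl fun j hj => by simp [hyT i hi, hyT j hj]
  rw [sum_sum_eq_blocks hS, sum_sum_eq_blocks hS w, hSS, hST, hTS, hTT, hswap]
  ring

end DoubleSum

theorem skWeight_comm (n : ℕ) (h : ℕ → ℝ) (J : ℕ → ℕ → ℝ) (i j : ℕ) :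
    skWeight n h J i j = skWeight n h J j i := by
  unfold skWeight
  rcases lt_trichotomy i j with hij | rfl | hij
  · simp [hij, hij.not_gt]
  · rfl
  · simp [hij, hij.not_gt]

theorem skWeight_self (n : ℕ) (h : ℕ → ℝ) (J : ℕ → ℕ → ℝ) (i : ℕ) : skWeight n h J i i = 0 := by
  simp [skWeight]

theorem isingH_congr (n : ℕ) (h : ℕ → ℝ) (J : ℕ → ℕ → ℝ) {x x' : ℕ → ℝ}
    (hx : ∀ i < n, x i = x' i) : isingH n h J x = isingH n h J x' := by
  unfold isingH
  congr 1
  · exact congrArg _ (sum_congr rfl fun i hi => by rw [hx i (mem_range.mp hi)])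
  · exact sum_congr rfl fun i hi => sum_congr rfl fun j hj => by
      rw [hx i (mem_range.mp hi), hx j (mem_range.mp hj)]

theorem skH_eq_isingH (n : ℕ) (h : ℕ → ℝ) (J : ℕ → ℕ → ℝ) {y : ℕ → ℝ} (hy : y n * y n = 1) :
    skH n h J y = isingH n h J (fun i => y i * y n) := by
  unfold skH isingH
  simp only [sum_range_succ, lt_irrefl, if_false, add_zero]
  have hnode : ∀ j ∈ range n, (if n < j then skWeight n h J n j * y n * y j else 0) = 0 :=
    fun j hj => if_neg (mem_range.mp hj).not_gt
  have hfield : ∀ i ∈ range n,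
      (if i < n then skWeight n h J i n * y i * y n else 0) = h i * (y i * y n) := by
    intro i hi
    simp only [mem_range.mp hi, ↓reduceIte, skWeight]
    ring
  have hcoupling : ∀ i ∈ range n, ∀ j ∈ range n,
      (if i < j then skWeight n h J i j * y i * y j else 0) =
        if i < j then J i j * (y i * y n) * (y j * y n) else 0 := by
    intro i _ j hj
    split_ifs with hij
    · simp only [skWeight, hij, if_true, (mem_range.mp hj).ne, if_false]
      linear_combination (-(J i j * y i * y j)) * hy
    · rfl
  rw [sum_eq_zero hnode, add_zero, sum_congr rfl fun i hi => by
    rw [sum_congr rfl (hcoupling i hi), hfield i hi], sum_add_distrib]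
  ring

theorem skH_eq_two_mul_skCut_sub (n : ℕ) (h : ℕ → ℝ) (J : ℕ → ℕ → ℝ) {S : Finset ℕ}
    (hS : S ⊆ range (n + 1)) {y : ℕ → ℝ} (hyS : ∀ i ∈ S, y i = 1)
    (hyT : ∀ i ∈ range (n + 1) \ S, y i = -1) :
    skH n h J y = 2 * skCut n h J S - skTotalWeight n h J := by
  have hH := sum_sum_eq_two_nsmul_sum_sum_lt (range (n + 1))
    (fun i j => skWeight n h J i j * y i * y j)
    (fun i j => by rw [skWeight_comm]; ring) (fun i => by rw [skWeight_self]; ring)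
  have hW := sum_sum_eq_two_nsmul_sum_sum_lt (range (n + 1)) (skWeight n h J)
    (skWeight_comm n h J) (skWeight_self n h J)
  have hsign := sum_sum_mul_sign_eq hS (skWeight n h J) (skWeight_comm n h J) y hyS hyT
  rw [two_nsmul] at hH hW
  unfold skH skTotalWeight skCut
  linarith

theorem image_isingH_eq_image_skH (n : ℕ) (h : ℕ → ℝ) (J : ℕ → ℕ → ℝ) :
    isingH n h J '' {x : ℕ → ℝ | ∀ i < n, x i = 1 ∨ x i = -1} =
      skH n h J '' {y : ℕ → ℝ | ∀ i < n + 1, y i = 1 ∨ y i = -1} := by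
  ext v
  constructor
  · rintro ⟨x, hx, rfl⟩
    refine ⟨fun i => if i < n then x i else 1, fun i _ => ?_, ?_⟩
    · dsimp only
      split_ifs with hin
      exacts [hx i hin, Or.inl rfl]
    · rw [skH_eq_isingH n h J (by simp)]
      exact isingH_congr n h J fun i hi => by simp [hi]
  · rintro ⟨y, hy, rfl⟩
    have hyn : y n = 1 ∨ y n = -1 := hy n n.lt_succ_self
    refine ⟨fun i => y i * y n, fun i hi => ?_, ?_⟩
    · rcases hy i (by omega) with hi | hi <;> rcases hyn with hn | hn <;> simp [hi, hn]
    · rw [skH_eq_isingH n h J (by rcases hyn with hn | hn <;> simp [hn])]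

theorem image_skH_eq_image_skCut (n : ℕ) (h : ℕ → ℝ) (J : ℕ → ℕ → ℝ) :
    skH n h J '' {y : ℕ → ℝ | ∀ i < n + 1, y i = 1 ∨ y i = -1} =
      (fun c => 2 * c - skTotalWeight n h J) '' (skCut n h J '' {S | S ⊆ range (n + 1)}) := by
  rw [Set.image_image]
  ext v
  constructor
  · rintro ⟨y, hy, rfl⟩
    refine ⟨(range (n + 1)).filter (fun i => y i = 1), filter_subset _ _, ?_⟩
    refine (skH_eq_two_mul_skCut_sub n h J (filter_subset _ _)
      (fun i hi => (mem_filter.mp hi).2) fun i hi => ?_).symm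
    obtain ⟨hi, hiS⟩ := mem_sdiff.mp hi
    exact (hy i (mem_range.mp hi)).resolve_left fun hyi => hiS (mem_filter.mpr ⟨hi, hyi⟩)
  · rintro ⟨S, hS, rfl⟩
    exact ⟨fun i => if i ∈ S then 1 else -1, fun i _ => by dsimp only; split_ifs <;> simp,
      skH_eq_two_mul_skCut_sub n h J hS (fun i hi => if_pos hi)
        fun i hi => if_neg (mem_sdiff.mp hi).2⟩

theorem statement_0_general (n : ℕ) (h : ℕ → ℝ) (J : ℕ → ℕ → ℝ) :
    sInf (isingH n h J '' {x : ℕ → ℝ | ∀ i < n, x i = 1 ∨ x i = -1})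
        = sInf (skH n h J '' {y : ℕ → ℝ | ∀ i < n + 1, y i = 1 ∨ y i = -1}) ∧
    sInf (isingH n h J '' {x : ℕ → ℝ | ∀ i < n, x i = 1 ∨ x i = -1})
        = 2 * skMC n h J - skTotalWeight n h J := by
  rw [image_isingH_eq_image_skH, image_skH_eq_image_skCut]
  refine ⟨rfl, ?_⟩
  have hcuts : (skCut n h J '' {S | S ⊆ range (n + 1)}).Finite :=
    ((range (n + 1)).powerset.finite_toSet.subset fun S hS => mem_powerset.mpr hS).image _
  have hnonempty : (skCut n h J '' {S | S ⊆ range (n + 1)}).Nonempty :=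
    ⟨_, ∅, empty_subset _, rfl⟩
  exact (Monotone.map_csInf_of_continuousAt (f := fun c => 2 * c - skTotalWeight n h J)
    (by fun_prop) (fun a b hab => by linarith) hnonempty hcuts.bddBelow).symm

/-- `min_{x ∈ {−1,+1}ⁿ} H(x) = min_{y ∈ {−1,+1}ⁿ⁺¹} H^SK(y) = 2·MC(G^SK) − W`. -/
theorem statement_0 (n : ℕ) (hn : 1 ≤ n) (h : ℕ → ℝ) (J : ℕ → ℕ → ℝ) :
    sInf (isingH n h J '' {x : ℕ → ℝ | ∀ i < n, x i = 1 ∨ x i = -1})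
        = sInf (skH n h J '' {y : ℕ → ℝ | ∀ i < n + 1, y i = 1 ∨ y i = -1}) ∧
    sInf (isingH n h J '' {x : ℕ → ℝ | ∀ i < n, x i = 1 ∨ x i = -1})
        = 2 * skMC n h J - skTotalWeight n h J :=
  statement_0_general n h J
end

section
/- Let G = (V, w) be a weighted graph and u, v distinct nodes forming an antipolar pair (ν_G({u,v}) < 0). Let G' = flip(G, u) be the graph obtained from G by negating the weights of all edges incident at u. Then {u, v} is non-separable in G'. -/
open Finset

variable {V : Type*}

/-- Cut capacity of a cut `S` in the weighted graph `(V, w)`: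
`c(S) = Σ_{u ∈ S, v ∈ V \ S} w(u,v)`. -/
noncomputable def cutVal [Fintype V] [DecidableEq V] (w : V → V → ℝ) (S : Finset V) : ℝ :=
  ∑ u ∈ S, ∑ v ∈ Sᶜ, w u v

/-- Minimum cut value `MC(G) = min_{S ⊆ V} c(S)` (cuts range over all subsets). -/
noncomputable def minCutVal [Fintype V] [DecidableEq V] (w : V → V → ℝ) : ℝ :=
  sInf (Set.range (cutVal w))

/-- `S` separates `X` iff `X ∩ S ∉ {∅, X}`. -/
def Separates [DecidableEq V] (S X : Finset V) : Prop :=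
  X ∩ S ≠ ∅ ∧ X ∩ S ≠ X

/-- `X` is non-separable: no min-cut separates `X`. -/
def NonSepSet [Fintype V] [DecidableEq V] (w : V → V → ℝ) (X : Finset V) : Prop :=
  ∀ S : Finset V, cutVal w S = minCutVal w → ¬ Separates S X

/-- `X` is weakly non-separable: some min-cut separates `X` and some min-cut does not. -/
def WeakNonSepSet [Fintype V] [DecidableEq V] (w : V → V → ℝ) (X : Finset V) : Prop :=
  (∃ S : Finset V, cutVal w S = minCutVal w ∧ Separates S X) ∧
  (∃ S : Finset V, cutVal w S = minCutVal w ∧ ¬ Separates S X)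

/-- Non-separability index
`ν_G(X) = min_{S ⊆ V, S ⊖ X} c(S) − min_{S ⊆ V, ¬(S ⊖ X)} c(S)`. -/
noncomputable def nuIdx [Fintype V] [DecidableEq V] (w : V → V → ℝ) (X : Finset V) : ℝ :=
  sInf (cutVal w '' {S : Finset V | Separates S X}) -
  sInf (cutVal w '' {S : Finset V | ¬ Separates S X})

/-- `flip(G, u)`: negate the weights of all edges incident at `u`. -/
noncomputable def flipNode [DecidableEq V] (w : V → V → ℝ) (u : V) (a b : V) : ℝ :=
  if (a = u ∧ b ≠ u) ∨ (b = u ∧ a ≠ u) then -w a b else w a b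

/-!
Negating the edges at `u` turns every cut value into `c(S ∆ {u}) - deg u`, where
`deg u = Σ_{b ≠ u} w(u, b)`: moving `u` to the other side of the cut exactly compensates the
sign change. Hence the min-cuts of `flip(G, u)` are the min-cuts of `G` with `u` moved across,
and moving `u` across swaps "separates `{u, v}`" and "does not separate `{u, v}`". A min-cut of
`flip(G, u)` separating `{u, v}` would give a min-cut of `G` not separating it, forcing
`ν_G({u, v}) ≥ 0`.
-/

open scoped symmDiff

section Cuts

variable [Fintype V] [DecidableEq V]

lemma cutVal_empty (w : V → V → ℝ) : cutVal w ∅ = 0 := by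
  simp [cutVal]

lemma cutVal_compl (w : V → V → ℝ) (hsymm : ∀ a b, w a b = w b a) (S : Finset V) :
    cutVal w Sᶜ = cutVal w S := by
  unfold cutVal
  rw [compl_compl, sum_comm]
  exact sum_congr rfl fun a _ => sum_congr rfl fun b _ => hsymm b a

lemma minCutVal_le (w : V → V → ℝ) (S : Finset V) : minCutVal w ≤ cutVal w S :=
  csInf_le (Set.finite_range _).bddBelow ⟨S, rfl⟩

lemma exists_cutVal_eq_minCutVal (w : V → V → ℝ) : ∃ S, cutVal w S = minCutVal w :=
  (Set.range_nonempty _).csInf_mem (Set.finite_range _)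

lemma nuIdx_nonneg (w : V → V → ℝ) {X : Finset V}
    (h : ∃ T, cutVal w T = minCutVal w ∧ ¬ Separates T X) : 0 ≤ nuIdx w X := by
  obtain ⟨T, hT, hTX⟩ := h
  have hnonsep : sInf (cutVal w '' {S | ¬ Separates S X}) ≤ minCutVal w :=
    hT ▸ csInf_le ((Set.toFinite _).image _).bddBelow ⟨T, hTX, rfl⟩
  have hsep : minCutVal w ≤ sInf (cutVal w '' {S | Separates S X}) := by
    rcases (cutVal w '' {S | Separates S X}).eq_empty_or_nonempty with hempty | hne
    · -- `sInf ∅ = 0` in `ℝ`, and `MC ≤ c(∅) = 0`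
      simpa [hempty, cutVal_empty] using minCutVal_le w ∅
    · exact le_csInf hne fun _ ⟨S, _, hS⟩ => hS ▸ minCutVal_le w S
  unfold nuIdx
  linarith

end Cuts

lemma separates_pair_iff [DecidableEq V] (S : Finset V) (u v : V) :
    Separates S {u, v} ↔ (u ∈ S ↔ v ∉ S) := by
  simp only [Separates, Ne, inter_eq_left, insert_subset_iff, singleton_subset_iff,
    eq_empty_iff_forall_notMem, mem_inter, mem_insert, mem_singleton]
  grind

lemma separates_pair_symmDiff_singleton [DecidableEq V] (S : Finset V) {u v : V} (huv : u ≠ v) :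
    Separates (S ∆ {u}) {u, v} ↔ ¬ Separates S {u, v} := by
  simp only [separates_pair_iff, mem_symmDiff, mem_singleton, huv.symm]
  tauto

section Flip

variable [DecidableEq V] (w : V → V → ℝ) (hsymm : ∀ a b, w a b = w b a)
include hsymm

lemma flipNode_symm (u a b : V) : flipNode w u a b = flipNode w u b a := by
  unfold flipNode
  rw [hsymm a b]
  exact if_congr (by tauto) rfl rfl

variable [Fintype V]

lemma cutVal_flipNode_of_notMem {u : V} {S : Finset V} (hu : u ∉ S) :
    cutVal (flipNode w u) S = cutVal w (insert u S) - ∑ b ∈ univ.erase u, w u b := by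
  have huc : u ∈ Sᶜ := mem_compl.mpr hu
  have hrow : ∀ a ∈ S, ∑ b ∈ Sᶜ, flipNode w u a b = -w u a + ∑ b ∈ Sᶜ.erase u, w a b := by
    intro a ha
    have hau : a ≠ u := ne_of_mem_of_not_mem ha hu
    rw [← add_sum_erase _ _ huc]
    congr 1
    · simp [flipNode, hau, hsymm a u]
    · refine sum_congr rfl fun b hb => ?_
      simp [flipNode, hau, ne_of_mem_erase hb]
  have hdegree : ∑ b ∈ univ.erase u, w u b = ∑ a ∈ S, w u a + ∑ b ∈ Sᶜ.erase u, w u b := by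
    rw [← sum_union]
    · congr 1
      ext b
      by_cases hb : b = u <;> simp [hb, hu, em]
    · exact disjoint_left.mpr fun b hb hb' => (mem_compl.mp (mem_of_mem_erase hb')) hb
  unfold cutVal
  rw [sum_congr rfl hrow, compl_insert, sum_insert hu, hdegree, sum_add_distrib, sum_neg_distrib]
  ring

lemma cutVal_flipNode (u : V) (S : Finset V) :
    cutVal (flipNode w u) S = cutVal w (S ∆ {u}) - ∑ b ∈ univ.erase u, w u b := by
  by_cases hu : u ∈ S
  · have hS : S ∆ {u} = (insert u Sᶜ)ᶜ := by
      ext x; by_cases x = u <;> simp_all [mem_symmDiff]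
    rw [← cutVal_compl _ (flipNode_symm w hsymm u), hS, cutVal_compl w hsymm,
      cutVal_flipNode_of_notMem w hsymm (notMem_compl.mpr hu)]
  · have hS : S ∆ {u} = insert u S := by
      ext x; by_cases x = u <;> simp_all [mem_symmDiff]
    rw [hS, cutVal_flipNode_of_notMem w hsymm hu]

lemma minCutVal_flipNode (u : V) :
    minCutVal (flipNode w u) = minCutVal w - ∑ b ∈ univ.erase u, w u b := by
  obtain ⟨S, hS⟩ := exists_cutVal_eq_minCutVal w
  obtain ⟨S', hS'⟩ := exists_cutVal_eq_minCutVal (flipNode w u)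
  have hle := minCutVal_le (flipNode w u) (S ∆ {u})
  have hge := minCutVal_le w (S' ∆ {u})
  rw [cutVal_flipNode w hsymm, symmDiff_symmDiff_cancel_right] at hle
  rw [cutVal_flipNode w hsymm] at hS'
  linarith

lemma cutVal_flipNode_eq_minCutVal_iff (u : V) (S : Finset V) :
    cutVal (flipNode w u) S = minCutVal (flipNode w u) ↔ cutVal w (S ∆ {u}) = minCutVal w := by
  rw [cutVal_flipNode w hsymm, minCutVal_flipNode w hsymm, sub_left_inj]

end Flip

theorem statement_12_general [Fintype V] [DecidableEq V]
    (w : V → V → ℝ) (hsymm : ∀ a b, w a b = w b a)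
    (u v : V) (huv : u ≠ v) (hanti : nuIdx w {u, v} < 0) :
    NonSepSet (flipNode w u) {u, v} := by
  intro S hS hsep
  have hmin : cutVal w (S ∆ {u}) = minCutVal w :=
    (cutVal_flipNode_eq_minCutVal_iff w hsymm u S).mp hS
  have hnonsep : ¬ Separates (S ∆ {u}) {u, v} :=
    fun h => (separates_pair_symmDiff_singleton S huv).mp h hsep
  exact hanti.not_ge (nuIdx_nonneg w ⟨S ∆ {u}, hmin, hnonsep⟩)

/-- if `u, v` form an antipolar pair in `G`, then `{u, v}` is non-separable
in `flip(G, u)`. -/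
theorem statement_12 [Fintype V] [DecidableEq V] [Nonempty V]
    (w : V → V → ℝ) (hsymm : ∀ a b, w a b = w b a) (hdiag : ∀ a, w a a = 0)
    (u v : V) (huv : u ≠ v) (hanti : nuIdx w {u, v} < 0) :
    NonSepSet (flipNode w u) {u, v} :=
  statement_12_general w hsymm u v huv hanti
end
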